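/- arXiv:2002.10646 — 3 statements merged into one kernel-verified Lean document; each statement's English description precedes it below -/
import Mathlib

section
/- Let S be a finite set of points in general position in the plane, each point colored red or blue, and let J be a set of k red points of S such that the convex hull of J contains no point of S other than the points of J. If S contains at least k−1 blue points, then S spans at least k(k−1)/2 empty red (2,1)-triangles each of which has at least one vertex in J. -/
open scoped Classical

/-- A finite set of points in the plane is in general position if no three of its points are
collinear, i.e. every 3-element subset is affinely independent. -/
def GenPos2 (S : Finset (EuclideanSpace ℝ (Fin 2))) : Prop :=
  ∀ T ⊆ S, T.card = 3 →
    AffineIndependent ℝ (Subtype.val : {x : EuclideanSpace ℝ (Fin 2) // x ∈ T} → EuclideanSpace ℝ (Fin 2))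

/-- `T` is empty with respect to `S`: no point of `S` other than the vertices lies in the
(topological) interior of the convex hull of `T`. -/
def EmptyIn2 (S T : Finset (EuclideanSpace ℝ (Fin 2))) : Prop :=
  ∀ s ∈ S, s ∉ T → s ∉ interior (convexHull ℝ (T : Set (EuclideanSpace ℝ (Fin 2))))

/-- The number of empty red (2,1)-triangles spanned by the bicolored set `R ∪ B`:
3-element subsets with two red points and one blue point whose convex hull contains no other
point of `R ∪ B` in its interior. -/
noncomputable def emptyRed21Count (R B : Finset (EuclideanSpace ℝ (Fin 2))) : ℕ :=
  (((R ∪ B).powersetCard 3).filter (fun T =>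
    (T ∩ R).card = 2 ∧ (T ∩ B).card = 1 ∧ EmptyIn2 (R ∪ B) T)).card

/-- The number of empty red (2,1)-triangles of `R ∪ B` having at least one vertex in `J`. -/
noncomputable def emptyRed21CountThrough (R B J : Finset (EuclideanSpace ℝ (Fin 2))) : ℕ :=
  (((R ∪ B).powersetCard 3).filter (fun T =>
    (T ∩ R).card = 2 ∧ (T ∩ B).card = 1 ∧ EmptyIn2 (R ∪ B) T ∧ (T ∩ J).Nonempty)).card

local notation "E2" => EuclideanSpace ℝ (Fin 2)

noncomputable def Ff (a0 a1 : ℝ) (b x : E2) : ℝ := (x 0 - b 0) * a0 + (x 1 - b 1) * a1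
noncomputable def Gf (a0 a1 : ℝ) (b x : E2) : ℝ := a1 * (x 0 - b 0) - a0 * (x 1 - b 1)
noncomputable def tau (a0 a1 : ℝ) (b x : E2) : ℝ := Gf a0 a1 b x / Ff a0 a1 b x

lemma e2_decomp (v : E2) :
    v = v 0 • EuclideanSpace.single (0: Fin 2) (1:ℝ) + v 1 • EuclideanSpace.single 1 1 := by
  ext i
  fin_cases i <;> simp [EuclideanSpace.single_apply]

lemma Ff_eq (f : E2 →L[ℝ] ℝ) (b x : E2) :
    f x - f b = Ff (f (EuclideanSpace.single 0 1)) (f (EuclideanSpace.single 1 1)) b x := by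
  have h := congrArg f (e2_decomp (x - b))
  rw [map_add, map_smul, map_smul, smul_eq_mul, smul_eq_mul] at h
  have h0 : (x - b) 0 = x 0 - b 0 := rfl
  have h1 : (x - b) 1 = x 1 - b 1 := rfl
  rw [h0, h1] at h
  rw [← map_sub f x b, h, Ff]




lemma range_fin3 (b j jm : E2) : Set.range ![b, j, jm] = ({b, j, jm} : Set _) := by
  rw [Matrix.range_cons, Matrix.range_cons, Matrix.range_cons_empty]
  ext x; simp; tauto

lemma not_affInd_of_ray {b j jm : E2} (c : ℝ) (h : jm - b = c • (j - b)) :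
    ¬ AffineIndependent ℝ ![b, j, jm] := by
  rw [affineIndependent_iff_not_collinear, not_not, range_fin3]
  rw [collinear_iff_of_mem (show b ∈ ({b,j,jm} : Set _) by simp)]
  refine ⟨j - b, ?_⟩
  rintro p (rfl | rfl | rfl)
  · exact ⟨0, by simp⟩
  · exact ⟨1, by simp⟩
  · exact ⟨c, by rw [← h]; simp⟩



lemma gp_affInd {S : Finset E2} (hgp : GenPos2 S) {p q r : E2}
    (hp : p ∈ S) (hq : q ∈ S) (hr : r ∈ S)
    (hpq : p ≠ q) (hpr : p ≠ r) (hqr : q ≠ r) :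
    AffineIndependent ℝ ![p, q, r] := by
  have hT : ({p, q, r} : Finset E2) ⊆ S := by
    intro x hx
    simp only [Finset.mem_insert, Finset.mem_singleton] at hx
    rcases hx with rfl | rfl | rfl <;> assumption
  have hcard : ({p, q, r} : Finset E2).card = 3 := by
    rw [Finset.card_insert_of_notMem (by simp [hpq, hpr]),
      Finset.card_insert_of_notMem (by simp [hqr]), Finset.card_singleton]
  have hAI := hgp _ hT hcard
  have hmem : ∀ i : Fin 3, ![p, q, r] i ∈ ({p, q, r} : Finset E2) := by
    intro i; fin_cases i <;> simp
  let f : Fin 3 ↪ {x : E2 // x ∈ ({p, q, r} : Finset E2)} :=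
    ⟨fun i => ⟨![p, q, r] i, hmem i⟩, by
      intro i j hij
      simp only [Subtype.mk.injEq] at hij
      fin_cases i <;> fin_cases j <;> simp_all <;> simp_all [eq_comm]⟩
  have hcomp := hAI.comp_embedding f
  have heq : (Subtype.val ∘ f) = ![p, q, r] := by funext i; fin_cases i <;> rfl
  rw [← heq]; exact hcomp

lemma interior_coords {p q r s : E2} (h : AffineIndependent ℝ ![p, q, r])
    (hs : s ∈ interior (convexHull ℝ ({p, q, r} : Set E2))) :
    ∃ a b c : ℝ, 0 < a ∧ 0 < b ∧ 0 < c ∧ a + b + c = 1 ∧ s = a • p + b • q + c • r := by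
  have htot : affineSpan ℝ (Set.range ![p, q, r]) = ⊤ := by
    rw [h.affineSpan_eq_top_iff_card_eq_finrank_add_one]
    simp [finrank_euclideanSpace_fin]
  let bas : AffineBasis (Fin 3) ℝ E2 := ⟨![p, q, r], h, htot⟩
  have hrange : Set.range (bas : Fin 3 → E2) = ({p, q, r} : Set E2) := by
    show Set.range ![p, q, r] = _
    rw [Matrix.range_cons, Matrix.range_cons, Matrix.range_cons_empty]
    ext x; simp; tauto
  rw [← hrange, bas.interior_convexHull] at hs
  refine ⟨bas.coord 0 s, bas.coord 1 s, bas.coord 2 s, hs 0, hs 1, hs 2, ?_, ?_⟩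
  · have := bas.sum_coord_apply_eq_one s
    rwa [Fin.sum_univ_three] at this
  · have := bas.linear_combination_coord_eq_self s
    rw [Fin.sum_univ_three] at this
    exact this.symm



lemma ray_of_tau_eq {a0 a1 : ℝ} {b j j' : E2} (hsq : 0 < a0 ^ 2 + a1 ^ 2)
    (hFj : 0 < Ff a0 a1 b j) (hFj' : 0 < Ff a0 a1 b j')
    (h : tau a0 a1 b j = tau a0 a1 b j') :
    ∃ c : ℝ, j' - b = c • (j - b) := by
  have hcross : Gf a0 a1 b j * Ff a0 a1 b j' = Gf a0 a1 b j' * Ff a0 a1 b j := by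
    rw [tau, tau, div_eq_div_iff (ne_of_gt hFj) (ne_of_gt hFj')] at h
    linarith [h]
  simp only [Ff, Gf] at hcross
  have hD : (j 0 - b 0) * (j' 1 - b 1) - (j' 0 - b 0) * (j 1 - b 1) = 0 := by
    have h2 : (a0 ^ 2 + a1 ^ 2) *
        ((j 0 - b 0) * (j' 1 - b 1) - (j' 0 - b 0) * (j 1 - b 1)) = 0 := by
      linear_combination hcross
    rcases mul_eq_zero.mp h2 with h3 | h3
    · exact absurd h3 (ne_of_gt hsq)
    · exact h3
  refine ⟨Ff a0 a1 b j' / Ff a0 a1 b j, ?_⟩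
  have h0 : Ff a0 a1 b j * (j' 0 - b 0) = Ff a0 a1 b j' * (j 0 - b 0) := by
    simp only [Ff]; linear_combination (-a1) * hD
  have h1 : Ff a0 a1 b j * (j' 1 - b 1) = Ff a0 a1 b j' * (j 1 - b 1) := by
    simp only [Ff]; linear_combination a0 * hD
  ext i
  fin_cases i
  · show j' 0 - b 0 = (Ff a0 a1 b j' / Ff a0 a1 b j) * (j 0 - b 0)
    rw [div_mul_eq_mul_div, eq_div_iff (ne_of_gt hFj)]
    linarith [h0]
  · show j' 1 - b 1 = (Ff a0 a1 b j' / Ff a0 a1 b j) * (j 1 - b 1)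
    rw [div_mul_eq_mul_div, eq_div_iff (ne_of_gt hFj)]
    linarith [h1]

set_option maxHeartbeats 2000000 in
lemma per_blue (R B J : Finset E2) (k : ℕ) (hdisj : Disjoint R B) (hgp : GenPos2 (R ∪ B))
    (hJR : J ⊆ R) (hJcard : J.card = k) (hk : 2 ≤ k)
    (hisland : ∀ s ∈ R ∪ B, s ∈ convexHull ℝ (J : Set (EuclideanSpace ℝ (Fin 2))) → s ∈ J)
    (b : E2) (hb : b ∈ B) :
    k - 1 - ((B.erase b).filter
        (fun x => x ∈ convexHull ℝ (insert b (J : Set (EuclideanSpace ℝ (Fin 2)))))).card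
      ≤ ((((R ∪ B).powersetCard 3).filter (fun T =>
          (T ∩ R).card = 2 ∧ (T ∩ B).card = 1 ∧ EmptyIn2 (R ∪ B) T ∧ (T ∩ J).Nonempty)).filter
          (fun T => b ∈ T)).card := by
  -- basic facts
  have hJne : J.Nonempty := Finset.card_pos.mp (by omega)
  have hbR : b ∉ R := fun h => (Finset.disjoint_left.mp hdisj) h hb
  have hbS : b ∈ R ∪ B := Finset.mem_union_right _ hb
  have hJS : ∀ j ∈ J, j ∈ R ∪ B := fun j hj => Finset.mem_union_left _ (hJR hj)
  have hbJ : ∀ j ∈ J, b ≠ j := fun j hj h => hbR (h ▸ hJR hj)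
  have hbhull : b ∉ convexHull ℝ (J : Set E2) := by
    intro h
    exact hbR (hJR (hisland b hbS h))
  -- separation
  obtain ⟨f, u, hfb, hfJ⟩ := geometric_hahn_banach_point_closed
    (convex_convexHull ℝ _) (J.finite_toSet.isClosed_convexHull ℝ) hbhull
  set a0 := f (EuclideanSpace.single 0 1) with ha0
  set a1 := f (EuclideanSpace.single 1 1) with ha1
  have hFhull : ∀ y ∈ convexHull ℝ (J : Set E2), 0 < Ff a0 a1 b y := by
    intro y hy
    rw [ha0, ha1, ← Ff_eq]
    have := hfJ y hy
    linarith
  have hJD0 : (J : Set E2) ⊆ convexHull ℝ (insert b (J : Set E2)) :=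
    (Set.subset_insert _ _).trans (subset_convexHull ℝ _)
  have hJhull : ∀ j ∈ J, (j : E2) ∈ convexHull ℝ (J : Set E2) :=
    fun j hj => subset_convexHull ℝ _ hj
  have hFJ : ∀ j ∈ J, 0 < Ff a0 a1 b j := fun j hj => hFhull j (hJhull j hj)
  have hsq : 0 < a0 ^ 2 + a1 ^ 2 := by
    obtain ⟨j0, hj0⟩ := hJne
    rcases eq_or_lt_of_le (by positivity : (0:ℝ) ≤ a0 ^ 2 + a1 ^ 2) with he | h
    · exfalso
      have ha0z : a0 = 0 := by nlinarith
      have ha1z : a1 = 0 := by nlinarith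
      have : Ff a0 a1 b j0 = 0 := by simp [Ff, ha0z, ha1z]
      have := hFJ j0 hj0
      linarith
    · exact h
  set D := convexHull ℝ (insert b (J : Set E2)) with hD
  have hbD : b ∈ D := subset_convexHull ℝ _ (Set.mem_insert _ _)
  have hJD : ∀ j ∈ J, (j : E2) ∈ D := fun j hj => hJD0 hj
  have hconvD : Convex ℝ D := convex_convexHull ℝ _
  -- F positive on D minus b
  have hFD : ∀ x ∈ D, x ≠ b → 0 < Ff a0 a1 b x := by
    intro x hxD hxb
    rw [hD, convexHull_insert (Finset.coe_nonempty.mpr hJne), mem_convexJoin] at hxD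
    simp only [Set.mem_singleton_iff, exists_eq_left] at hxD
    obtain ⟨y, hy, a, c, ha, hc, hac, hcomb⟩ := hxD
    have hFy : 0 < Ff a0 a1 b y := hFhull y hy
    have hcne : c ≠ 0 := by
      intro h
      apply hxb
      have ha1' : a = 1 := by linarith
      rw [← hcomb, h, ha1']
      simp
    have hx0 : x 0 = a * b 0 + c * y 0 := by
      rw [← hcomb]; rfl
    have hx1 : x 1 = a * b 1 + c * y 1 := by
      rw [← hcomb]; rfl
    have hFx : Ff a0 a1 b x = c * Ff a0 a1 b y := by
      simp only [Ff]
      rw [hx0, hx1]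
      linear_combination (a0 * b 0 + a1 * b 1) * hac
    rw [hFx]
    exact mul_pos (lt_of_le_of_ne hc (Ne.symm hcne)) hFy
  -- tau is injective on J
  have hinj : ∀ j ∈ J, ∀ j' ∈ J, j ≠ j' → tau a0 a1 b j ≠ tau a0 a1 b j' := by
    intro j hj j' hj' hne htau
    obtain ⟨c, hc⟩ := ray_of_tau_eq hsq (hFJ j hj) (hFJ j' hj') htau
    have hAI := gp_affInd hgp hbS (hJS j hj) (hJS j' hj') (hbJ j hj) (hbJ j' hj') hne
    exact not_affInd_of_ray c hc hAI
  -- the tau-maximal point of J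
  obtain ⟨jm, hjm, hjmax⟩ := J.exists_max_image (tau a0 a1 b) hJne
  have hstrict : ∀ j ∈ J.erase jm, tau a0 a1 b j < tau a0 a1 b jm := by
    intro j hj
    have hjJ : j ∈ J := Finset.mem_of_mem_erase hj
    have hne : j ≠ jm := Finset.ne_of_mem_erase hj
    exact lt_of_le_of_ne (hjmax j hjJ) (hinj j hjJ jm hjm hne)
  -- candidate sets
  set Xs : E2 → Finset E2 := fun j => (R ∪ B).filter
    (fun x => x ∈ D ∧ x ≠ b ∧ tau a0 a1 b j < tau a0 a1 b x) with hXs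
  have hXne : ∀ j ∈ J.erase jm, (Xs j).Nonempty := by
    intro j hj
    refine ⟨jm, ?_⟩
    rw [hXs, Finset.mem_filter]
    exact ⟨hJS jm hjm, hJD jm hjm, (hbJ jm hjm).symm, hstrict j hj⟩
  -- choice of minimal tau element
  set xj : E2 → E2 := fun j =>
    if h : (Xs j).Nonempty then
      Classical.choose ((Xs j).exists_min_image (tau a0 a1 b) h) else b with hxj
  have hxj_spec : ∀ j ∈ J.erase jm, xj j ∈ Xs j ∧
      ∀ x ∈ Xs j, tau a0 a1 b (xj j) ≤ tau a0 a1 b x := by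
    intro j hj
    have h := hXne j hj
    rw [hxj]
    simp only [dif_pos h]
    obtain ⟨hmem, hmin⟩ := Classical.choose_spec ((Xs j).exists_min_image (tau a0 a1 b) h)
    exact ⟨hmem, hmin⟩
  -- facts about xj
  have hxj_mem : ∀ j ∈ J.erase jm, xj j ∈ R ∪ B ∧ xj j ∈ D ∧ xj j ≠ b ∧
      tau a0 a1 b j < tau a0 a1 b (xj j) := by
    intro j hj
    have h := (hxj_spec j hj).1
    rw [hXs, Finset.mem_filter] at h
    exact ⟨h.1, h.2.1, h.2.2.1, h.2.2.2⟩
  -- emptiness of the triangles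
  have hempty : ∀ j ∈ J.erase jm, ∀ s ∈ R ∪ B,
      s ∉ interior (convexHull ℝ ({b, j, xj j} : Set E2)) := by
    intro j hj s hs hsint
    have hjJ : j ∈ J := Finset.mem_of_mem_erase hj
    obtain ⟨hxS, hxD, hxb, hτ⟩ := hxj_mem j hj
    have hjb : j ≠ b := (hbJ j hjJ).symm
    have hjx : j ≠ xj j := by
      intro h; rw [← h] at hτ; exact lt_irrefl _ hτ
    have hAI : AffineIndependent ℝ ![b, j, xj j] :=
      gp_affInd hgp hbS (hJS j hjJ) hxS (hbJ j hjJ) (Ne.symm hxb) hjx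
    obtain ⟨c0, c1, c2, h0, h1, h2, hsum, hcomb⟩ := interior_coords hAI hsint
    have hsubD : convexHull ℝ ({b, j, xj j} : Set E2) ⊆ D := by
      apply convexHull_min _ hconvD
      intro z hz
      simp only [Set.mem_insert_iff, Set.mem_singleton_iff] at hz
      rcases hz with h | h | h
      · rw [h]; exact hbD
      · rw [h]; exact hJD j hjJ
      · rw [h]; exact hxD
    have hsD : s ∈ D := hsubD (interior_subset hsint)
    have hs0 : s 0 = c0 * b 0 + c1 * j 0 + c2 * (xj j) 0 := by rw [hcomb]; rfl
    have hs1 : s 1 = c0 * b 1 + c1 * j 1 + c2 * (xj j) 1 := by rw [hcomb]; rfl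
    have hFs : Ff a0 a1 b s = c1 * Ff a0 a1 b j + c2 * Ff a0 a1 b (xj j) := by
      simp only [Ff]; rw [hs0, hs1]; linear_combination (a0 * b 0 + a1 * b 1) * hsum
    have hGs : Gf a0 a1 b s = c1 * Gf a0 a1 b j + c2 * Gf a0 a1 b (xj j) := by
      simp only [Gf]; rw [hs0, hs1]; linear_combination (a1 * b 0 - a0 * b 1) * hsum
    have hFj := hFJ j hjJ
    have hFx := hFD (xj j) hxD hxb
    have hFspos : 0 < Ff a0 a1 b s := by
      rw [hFs]
      nlinarith [mul_pos h1 hFj, mul_pos h2 hFx]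
    have hsb : s ≠ b := by
      intro h
      rw [h] at hFspos
      simp [Ff] at hFspos
    have hcross : Gf a0 a1 b j * Ff a0 a1 b (xj j) < Gf a0 a1 b (xj j) * Ff a0 a1 b j := by
      rw [tau, tau, div_lt_div_iff₀ hFj hFx] at hτ; exact hτ
    have hτ1 : tau a0 a1 b j < tau a0 a1 b s := by
      rw [tau, tau, div_lt_div_iff₀ hFj hFspos, hFs, hGs]
      nlinarith [mul_pos h2 (sub_pos.mpr hcross)]
    have hτ2 : tau a0 a1 b s < tau a0 a1 b (xj j) := by
      rw [tau, tau, div_lt_div_iff₀ hFspos hFx, hFs, hGs]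
      nlinarith [mul_pos h1 (sub_pos.mpr hcross)]
    have hsX : s ∈ Xs j := by
      rw [hXs, Finset.mem_filter]
      exact ⟨hs, hsD, hsb, hτ1⟩
    exact absurd ((hxj_spec j hj).2 s hsX) (not_le.mpr hτ2)
  -- good and bad indices
  set good := (J.erase jm).filter (fun j => xj j ∈ R) with hgood
  set bad := (J.erase jm).filter (fun j => ¬ xj j ∈ R) with hbad
  have hcards : good.card + bad.card = k - 1 := by
    rw [hgood, hbad, Finset.card_filter_add_card_filter_not,
      Finset.card_erase_of_mem hjm, hJcard]
  have hbadle : bad.card ≤ ((B.erase b).filter (fun x => x ∈ D)).card := by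
    apply Finset.card_le_card_of_injOn xj
    · intro j hj
      rw [hbad, Finset.mem_coe, Finset.mem_filter] at hj
      obtain ⟨hjE, hjnR⟩ := hj
      obtain ⟨hxS, hxD, hxb, hτ⟩ := hxj_mem j hjE
      rw [Finset.mem_coe, Finset.mem_filter, Finset.mem_erase]
      have hxB : xj j ∈ B := by
        rcases Finset.mem_union.mp hxS with h | h
        · exact absurd h hjnR
        · exact h
      exact ⟨⟨hxb, hxB⟩, hxD⟩
    · intro j hj j' hj' heq
      rw [Finset.mem_coe, hbad, Finset.mem_filter] at hj hj'
      have hjJ : j ∈ J := Finset.mem_of_mem_erase hj.1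
      have hj'J : j' ∈ J := Finset.mem_of_mem_erase hj'.1
      by_contra hne
      rcases lt_trichotomy (tau a0 a1 b j) (tau a0 a1 b j') with h | h | h
      · have hj'X : j' ∈ Xs j := by
          rw [hXs, Finset.mem_filter]
          exact ⟨hJS j' hj'J, hJD j' hj'J, (hbJ j' hj'J).symm, h⟩
        have h1 := (hxj_spec j hj.1).2 j' hj'X
        have h2 := (hxj_mem j' hj'.1).2.2.2
        rw [← heq] at h2
        linarith
      · exact hinj j hjJ j' hj'J hne h
      · have hjX : j ∈ Xs j' := by
          rw [hXs, Finset.mem_filter]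
          exact ⟨hJS j hjJ, hJD j hjJ, (hbJ j hjJ).symm, h⟩
        have h1 := (hxj_spec j' hj'.1).2 j hjX
        have h2 := (hxj_mem j hj.1).2.2.2
        rw [heq] at h2
        linarith
  -- the triangles are counted
  have himage : ∀ j ∈ good, ({b, j, xj j} : Finset E2) ∈ ((((R ∪ B).powersetCard 3).filter (fun T =>
      (T ∩ R).card = 2 ∧ (T ∩ B).card = 1 ∧ EmptyIn2 (R ∪ B) T ∧ (T ∩ J).Nonempty)).filter
      (fun T => b ∈ T)) := by
    intro j hjg
    rw [hgood, Finset.mem_filter] at hjg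
    obtain ⟨hjE, hxR⟩ := hjg
    have hjJ : j ∈ J := Finset.mem_of_mem_erase hjE
    obtain ⟨hxS, hxD, hxb, hτ⟩ := hxj_mem j hjE
    have hjb : j ≠ b := (hbJ j hjJ).symm
    have hjx : j ≠ xj j := by
      intro h; rw [← h] at hτ; exact lt_irrefl _ hτ
    have hjR : j ∈ R := hJR hjJ
    have hxnB : xj j ∉ B := fun h => (Finset.disjoint_left.mp hdisj) hxR h
    have hjnB : j ∉ B := fun h => (Finset.disjoint_left.mp hdisj) hjR h
    have hbmem : b ∈ ({b, j, xj j} : Finset E2) := Finset.mem_insert_self _ _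
    have hcard3 : ({b, j, xj j} : Finset E2).card = 3 := by
      rw [Finset.card_insert_of_notMem (by simp [hjb.symm, Ne.symm hxb]),
        Finset.card_insert_of_notMem (by simp [hjx]), Finset.card_singleton]
    rw [Finset.mem_filter, Finset.mem_filter, Finset.mem_powersetCard]
    refine ⟨⟨⟨?_, hcard3⟩, ?_, ?_, ?_, ?_⟩, hbmem⟩
    · intro z hz
      simp only [Finset.mem_insert, Finset.mem_singleton] at hz
      rcases hz with h | h | h
      · rw [h]; exact hbS
      · rw [h]; exact hJS j hjJ
      · rw [h]; exact hxS
    · have hTR : ({b, j, xj j} : Finset E2) ∩ R = {j, xj j} := by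
        ext y
        simp only [Finset.mem_inter, Finset.mem_insert, Finset.mem_singleton]
        constructor
        · rintro ⟨rfl | rfl | rfl, hy⟩
          · exact absurd hy hbR
          · exact Or.inl rfl
          · exact Or.inr rfl
        · rintro (rfl | rfl)
          · exact ⟨Or.inr (Or.inl rfl), hjR⟩
          · exact ⟨Or.inr (Or.inr rfl), hxR⟩
      rw [hTR, Finset.card_insert_of_notMem (by simp [hjx]), Finset.card_singleton]
    · have hTB : ({b, j, xj j} : Finset E2) ∩ B = {b} := by
        ext y
        simp only [Finset.mem_inter, Finset.mem_insert, Finset.mem_singleton]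
        constructor
        · rintro ⟨rfl | rfl | rfl, hy⟩
          · exact rfl
          · exact absurd hy hjnB
          · exact absurd hy hxnB
        · rintro rfl
          exact ⟨Or.inl rfl, hb⟩
      rw [hTB, Finset.card_singleton]
    · intro s hs _
      have hcoe : ((({b, j, xj j} : Finset E2)) : Set E2) = ({b, j, xj j} : Set E2) := by
        simp
      rw [hcoe]
      exact hempty j hjE s hs
    · exact ⟨j, Finset.mem_inter.mpr ⟨by simp, hjJ⟩⟩
  have hinjphi : Set.InjOn (fun j => ({b, j, xj j} : Finset E2)) good := by
    intro j hjg j' hj'g heq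
    simp only at heq
    rw [Finset.mem_coe, hgood, Finset.mem_filter] at hjg hj'g
    have hjE := hjg.1
    have hj'E := hj'g.1
    have hjJ : j ∈ J := Finset.mem_of_mem_erase hjE
    have hj'J : j' ∈ J := Finset.mem_of_mem_erase hj'E
    by_contra hne
    have hjmem : j ∈ ({b, j', xj j'} : Finset E2) := by
      rw [← heq]; simp
    have hj'mem : j' ∈ ({b, j, xj j} : Finset E2) := by
      rw [heq]; simp
    simp only [Finset.mem_insert, Finset.mem_singleton] at hjmem hj'mem
    have hjx' : j = xj j' := by
      rcases hjmem with h | h | h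
      · exact absurd h.symm (hbJ j hjJ)
      · exact absurd h hne
      · exact h
    have hj'x : j' = xj j := by
      rcases hj'mem with h | h | h
      · exact absurd h.symm (hbJ j' hj'J)
      · exact absurd h (Ne.symm hne)
      · exact h
    have h1 := (hxj_mem j hjE).2.2.2
    have h2 := (hxj_mem j' hj'E).2.2.2
    rw [← hj'x] at h1
    rw [← hjx'] at h2
    linarith
  calc k - 1 - ((B.erase b).filter (fun x => x ∈ D)).card
      ≤ good.card := by omega
    _ = (good.image (fun j => ({b, j, xj j} : Finset E2))).card :=
        (Finset.card_image_of_injOn hinjphi).symm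
    _ ≤ _ := by
        apply Finset.card_le_card
        intro T hT
        obtain ⟨j, hjg, rfl⟩ := Finset.mem_image.mp hT
        exact himage j hjg



-- x in conv(J ∪ {b}), x ≠ b, b not in conv J (closed) ⇒ infDist x (conv J) < infDist b (conv J)
lemma dist_decrease {J : Set E2} (hJfin : J.Finite) (hJne : J.Nonempty) {b x : E2}
    (hb : b ∉ convexHull ℝ J) (hx : x ∈ convexHull ℝ (insert b J)) (hxb : x ≠ b) :
    Metric.infDist x (convexHull ℝ J) < Metric.infDist b (convexHull ℝ J) := by
  have hKfin : IsCompact (convexHull ℝ J) := hJfin.isCompact_convexHull ℝ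
  have hKcl : IsClosed (convexHull ℝ J) := hJfin.isClosed_convexHull ℝ
  have hKne : (convexHull ℝ J).Nonempty := hJne.convexHull
  have hdb : 0 < Metric.infDist b (convexHull ℝ J) :=
    (hKcl.notMem_iff_infDist_pos hKne).mp hb
  rw [convexHull_insert hJne, mem_convexJoin] at hx
  simp only [Set.mem_singleton_iff, exists_eq_left] at hx
  obtain ⟨y, hy, hseg⟩ := hx
  obtain ⟨a, c, ha, hc, hac, hcomb⟩ := hseg
  -- x = a • b + c • y
  obtain ⟨y', hy', hdy'⟩ := hKfin.exists_infDist_eq_dist hKne b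
  have hane : a ≠ 1 := by
    intro h1
    apply hxb
    have : c = 0 := by linarith
    rw [← hcomb, this, h1]; simp
  have ha1 : a < 1 := lt_of_le_of_ne (by linarith) hane
  have hz : a • y' + c • y ∈ convexHull ℝ J :=
    (convex_convexHull ℝ J) hy' hy ha hc hac
  have hdist : dist x (a • y' + c • y) = a * dist b y' := by
    rw [dist_eq_norm, dist_eq_norm, ← hcomb]
    have : a • b + c • y - (a • y' + c • y) = a • (b - y') := by
      rw [smul_sub]; abel
    rw [this, norm_smul, Real.norm_of_nonneg ha]
  calc Metric.infDist x (convexHull ℝ J) ≤ dist x (a • y' + c • y) :=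
        Metric.infDist_le_dist_of_mem hz
    _ = a * dist b y' := hdist
    _ < 1 * dist b y' := by
        apply mul_lt_mul_of_pos_right ha1
        rw [← hdy']; exact hdb
    _ = Metric.infDist b (convexHull ℝ J) := by rw [one_mul, hdy']



lemma rank_card {α : Type*} [DecidableEq α] (B : Finset α) (d : α → ℝ) (i : ℕ) :
    min (i + 1) B.card ≤ (B.filter (fun b => (B.filter (fun x => d x < d b)).card ≤ i)).card := by
  induction i with
  | zero =>
    rcases B.eq_empty_or_nonempty with rfl | hne
    · simp
    · obtain ⟨b0, hb0, hmin⟩ := B.exists_min_image d hne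
      have hb0f : b0 ∈ B.filter (fun b => (B.filter (fun x => d x < d b)).card ≤ 0) := by
        rw [Finset.mem_filter]
        refine ⟨hb0, ?_⟩
        have : B.filter (fun x => d x < d b0) = ∅ := by
          rw [Finset.filter_eq_empty_iff]
          intro x hx
          exact not_lt.mpr (hmin x hx)
        simp [this]
      calc min (0 + 1) B.card ≤ 1 := min_le_left _ _
        _ ≤ _ := Finset.card_pos.mpr ⟨b0, hb0f⟩
  | succ i ih =>
    have hsub : (B.filter (fun b => (B.filter (fun x => d x < d b)).card ≤ i))
        ⊆ (B.filter (fun b => (B.filter (fun x => d x < d b)).card ≤ i + 1)) := by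
      intro x hx
      rw [Finset.mem_filter] at hx ⊢
      exact ⟨hx.1, hx.2.trans (Nat.le_succ i)⟩
    have hsubc := Finset.card_le_card hsub
    rcases le_or_gt B.card (i + 1) with hle | hlt
    · have h1 : min (i + 1 + 1) B.card ≤ B.card := min_le_right _ _
      have h2 : min (i + 1) B.card = B.card := min_eq_right hle
      omega
    · have hmin_eq : min (i + 1) B.card = i + 1 := min_eq_left (by omega)
      rw [hmin_eq] at ih
      rcases le_or_gt (i + 2) (B.filter (fun b => (B.filter (fun x => d x < d b)).card ≤ i)).card
        with hbig | hsmall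
      · have h1 : min (i + 1 + 1) B.card ≤ i + 2 := min_le_left _ _
        omega
      · have hAi : (B.filter (fun b => (B.filter (fun x => d x < d b)).card ≤ i)).card = i + 1 := by
          omega
        have hdiff : (B \ B.filter (fun b => (B.filter (fun x => d x < d b)).card ≤ i)).Nonempty := by
          rw [← Finset.card_pos, Finset.card_sdiff_of_subset (Finset.filter_subset _ _)]
          omega
        obtain ⟨b1, hb1, hmin⟩ :=
          (B \ B.filter (fun b => (B.filter (fun x => d x < d b)).card ≤ i)).exists_min_image d hdiff
        have hb1B : b1 ∈ B := (Finset.mem_sdiff.mp hb1).1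
        have hb1nA : b1 ∉ B.filter (fun b => (B.filter (fun x => d x < d b)).card ≤ i) :=
          (Finset.mem_sdiff.mp hb1).2
        have hsub2 : B.filter (fun x => d x < d b1)
            ⊆ B.filter (fun b => (B.filter (fun x => d x < d b)).card ≤ i) := by
          intro x hx
          rw [Finset.mem_filter] at hx
          by_contra hxn
          have hxBA : x ∈ B \ B.filter (fun b => (B.filter (fun x => d x < d b)).card ≤ i) :=
            Finset.mem_sdiff.mpr ⟨hx.1, hxn⟩
          exact absurd hx.2 (not_lt.mpr (hmin x hxBA))
        have hb1A : b1 ∈ B.filter (fun b => (B.filter (fun x => d x < d b)).card ≤ i + 1) := by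
          rw [Finset.mem_filter]
          refine ⟨hb1B, ?_⟩
          have := Finset.card_le_card hsub2
          omega
        have hins : insert b1 (B.filter (fun b => (B.filter (fun x => d x < d b)).card ≤ i))
            ⊆ B.filter (fun b => (B.filter (fun x => d x < d b)).card ≤ i + 1) := by
          intro x hx
          rcases Finset.mem_insert.mp hx with rfl | hx
          · exact hb1A
          · exact hsub hx
        have hinsc := Finset.card_le_card hins
        rw [Finset.card_insert_of_notMem hb1nA, hAi] at hinsc
        have h1 : min (i + 1 + 1) B.card ≤ i + 2 := min_le_left _ _
        omega

lemma sum_rank {α : Type*} [DecidableEq α] (B : Finset α) (d : α → ℝ) (K : ℕ)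
    (hK : K ≤ B.card) :
    K * (K + 1) / 2 ≤ ∑ b ∈ B, (K - (B.filter (fun x => d x < d b)).card) := by
  have hterm : ∀ b, K - (B.filter (fun x => d x < d b)).card
      = ((Finset.range K).filter (fun t => (B.filter (fun x => d x < d b)).card ≤ t)).card := by
    intro b
    have : (Finset.range K).filter (fun t => (B.filter (fun x => d x < d b)).card ≤ t)
        = Finset.Ico (B.filter (fun x => d x < d b)).card K := by
      ext t; simp [Finset.mem_Ico, Finset.mem_range, and_comm]
    rw [this, Nat.card_Ico]
  calc K * (K + 1) / 2
      = ∑ t ∈ Finset.range K, (t + 1) := by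
        have h1 := Finset.sum_range_id (K + 1)
        have h2 : ∑ i ∈ Finset.range (K + 1), i = (∑ i ∈ Finset.range K, (i + 1)) + 0 :=
          Finset.sum_range_succ' id K
        have h3 : K * (K + 1) = (K + 1) * ((K + 1) - 1) := by
          rw [Nat.add_sub_cancel, Nat.mul_comm]
        omega
    _ ≤ ∑ t ∈ Finset.range K, (B.filter (fun b => (B.filter (fun x => d x < d b)).card ≤ t)).card := by
        apply Finset.sum_le_sum
        intro t ht
        rw [Finset.mem_range] at ht
        have h4 := rank_card B d t
        have hmin : min (t + 1) B.card = t + 1 := min_eq_left (by omega)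
        omega
    _ = ∑ b ∈ B, (K - (B.filter (fun x => d x < d b)).card) := by
        simp_rw [hterm, Finset.card_filter]
        rw [Finset.sum_comm]


set_option maxHeartbeats 2000000 in
theorem empty_red_21_triangles_through_convex_cluster :
    ∀ (k : ℕ) (R B J : Finset (EuclideanSpace ℝ (Fin 2))),
      Disjoint R B → GenPos2 (R ∪ B) →
      J ⊆ R → J.card = k →
      (∀ s ∈ R ∪ B, s ∈ convexHull ℝ (J : Set (EuclideanSpace ℝ (Fin 2))) → s ∈ J) →
      k - 1 ≤ B.card →
      k * (k - 1) / 2 ≤ emptyRed21CountThrough R B J := by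
  intro k R B J hdisj hgp hJR hJcard hisland hBcard
  rcases Nat.lt_or_ge k 2 with hk | hk
  · have : k * (k - 1) / 2 = 0 := by interval_cases k <;> rfl
    rw [this]
    exact Nat.zero_le _
  · have hJne : J.Nonempty := Finset.card_pos.mp (by omega)
    have hJSne : (J : Set (EuclideanSpace ℝ (Fin 2))).Nonempty := Finset.coe_nonempty.mpr hJne
    rw [emptyRed21CountThrough]
    set d : EuclideanSpace ℝ (Fin 2) → ℝ :=
      fun x => Metric.infDist x (convexHull ℝ (J : Set (EuclideanSpace ℝ (Fin 2)))) with hd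
    -- each blue in the cone over another blue is strictly closer
    have hcb : ∀ b ∈ B, ((B.erase b).filter
        (fun x => x ∈ convexHull ℝ (insert b (J : Set (EuclideanSpace ℝ (Fin 2)))))).card
        ≤ (B.filter (fun x => d x < d b)).card := by
      intro b hb
      have hbhull : b ∉ convexHull ℝ (J : Set (EuclideanSpace ℝ (Fin 2))) := by
        intro h
        have hbJ := hisland b (Finset.mem_union_right _ hb) h
        exact (Finset.disjoint_left.mp hdisj) (hJR hbJ) hb
      apply Finset.card_le_card
      intro x hx
      rw [Finset.mem_filter, Finset.mem_erase] at hx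
      obtain ⟨⟨hxb, hxB⟩, hxD⟩ := hx
      rw [Finset.mem_filter]
      exact ⟨hxB, dist_decrease J.finite_toSet hJSne hbhull hxD hxb⟩
    -- the per-blue triangle families are disjoint
    set bigT := (((R ∪ B).powersetCard 3).filter (fun T =>
      (T ∩ R).card = 2 ∧ (T ∩ B).card = 1 ∧ EmptyIn2 (R ∪ B) T ∧ (T ∩ J).Nonempty))
      with hbigT
    have hdisjT : ∀ b ∈ B, ∀ b' ∈ B, b ≠ b' →
        Disjoint (bigT.filter (fun T => b ∈ T)) (bigT.filter (fun T => b' ∈ T)) := by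
      intro b hb b' hb' hne
      rw [Finset.disjoint_left]
      intro T hT hT'
      rw [Finset.mem_filter] at hT hT'
      have h1 : (T ∩ B).card = 1 := (Finset.mem_filter.mp hT.1).2.2.1
      have hsub : ({b, b'} : Finset (EuclideanSpace ℝ (Fin 2))) ⊆ T ∩ B := by
        intro z hz
        simp only [Finset.mem_insert, Finset.mem_singleton] at hz
        rcases hz with h | h
        · rw [h]; exact Finset.mem_inter.mpr ⟨hT.2, hb⟩
        · rw [h]; exact Finset.mem_inter.mpr ⟨hT'.2, hb'⟩
      have h2 : ({b, b'} : Finset (EuclideanSpace ℝ (Fin 2))).card = 2 := by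
        rw [Finset.card_insert_of_notMem (by simp [hne]), Finset.card_singleton]
      have := Finset.card_le_card hsub
      omega
    have hsum_le : ∑ b ∈ B, (bigT.filter (fun T => b ∈ T)).card ≤ bigT.card := by
      rw [← Finset.card_biUnion hdisjT]
      apply Finset.card_le_card
      intro T hT
      rw [Finset.mem_biUnion] at hT
      obtain ⟨b, _, hTb⟩ := hT
      exact (Finset.mem_filter.mp hTb).1
    have hperb : ∀ b ∈ B, (k - 1) - (B.filter (fun x => d x < d b)).card
        ≤ (bigT.filter (fun T => b ∈ T)).card := by
      intro b hb
      rw [hbigT]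
      have h1 := per_blue R B J k hdisj hgp hJR hJcard hk hisland b hb
      have h2 := hcb b hb
      omega
    calc k * (k - 1) / 2 = (k - 1) * ((k - 1) + 1) / 2 := by
          have : k - 1 + 1 = k := by omega
          rw [this, Nat.mul_comm]
      _ ≤ ∑ b ∈ B, ((k - 1) - (B.filter (fun x => d x < d b)).card) :=
          sum_rank B d (k - 1) hBcard
      _ ≤ ∑ b ∈ B, (bigT.filter (fun T => b ∈ T)).card :=
          Finset.sum_le_sum hperb
      _ ≤ bigT.card := hsum_le
end

section
/- Let S′ be a finite set of points in ℝ³ all of whose third coordinates are strictly positive, and let π : {x ∈ ℝ³ : x₃ > 0} → ℝ³ be the central projection from the origin onto the plane x₃ = 1, defined by π(x) = x / x₃. Let a, b, c ∈ S′. If no point π(s), for s ∈ S′ ∖ {a, b, c}, lies in the relative interior of the convex hull of {π(a), π(b), π(c)}, then no point of S′ lies in the interior of the convex hull of {0, a, b, c} (the tetrahedron with apex the origin and base vertices a, b, c). -/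
open Set Matrix

/-- Central projection from the origin onto the plane `x₃ = 1`. -/
noncomputable def centralProj (x : EuclideanSpace ℝ (Fin 3)) : EuclideanSpace ℝ (Fin 3) :=
  (x 2)⁻¹ • x

noncomputable def Lmap : EuclideanSpace ℝ (Fin 2) →ₗᵢ[ℝ] EuclideanSpace ℝ (Fin 3) where
  toLinearMap :=
  { toFun := fun y => !₂[y 0, y 1, 0]
    map_add' := by
      intro x y; ext i; fin_cases i <;>
        simp [PiLp.add_apply]
    map_smul' := by
      intro c y; ext i; fin_cases i <;>
        simp [PiLp.smul_apply] }
  norm_map' := by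
    intro y
    rw [EuclideanSpace.norm_eq, EuclideanSpace.norm_eq]
    simp [Fin.sum_univ_three, Fin.sum_univ_two]

noncomputable def phiMap : EuclideanSpace ℝ (Fin 2) →ᵃⁱ[ℝ] EuclideanSpace ℝ (Fin 3) :=
  (AffineIsometryEquiv.constVAdd ℝ (EuclideanSpace ℝ (Fin 3))
    (EuclideanSpace.single 2 1)).toAffineIsometry.comp Lmap.toAffineIsometry

lemma phiMap_apply (y : EuclideanSpace ℝ (Fin 2)) (i : Fin 3) :
    phiMap y i = ![y 0, y 1, 1] i := by
  fin_cases i <;>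
    simp [phiMap, Lmap, AffineIsometryEquiv.coe_constVAdd, PiLp.add_apply,
      EuclideanSpace.single_apply, vadd_eq_add]

lemma phiMap_eq (x : EuclideanSpace ℝ (Fin 3)) (hx : x 2 = 1) :
    phiMap !₂[x 0, x 1] = x := by
  ext i
  rw [phiMap_apply]
  fin_cases i <;> simp [hx]

lemma aux_mem_intrinsic (u v w : EuclideanSpace ℝ (Fin 3))
    (hind : AffineIndependent ℝ ![u, v, w])
    (hu : u 2 = 1) (hv : v 2 = 1) (hw : w 2 = 1)
    (t : Fin 3 → ℝ) (ht : ∀ i, 0 < t i) (hts : t 0 + t 1 + t 2 = 1) :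
    t 0 • u + t 1 • v + t 2 • w ∈
      intrinsicInterior ℝ (convexHull ℝ ({u, v, w} : Set (EuclideanSpace ℝ (Fin 3)))) := by
  classical
  set p : Fin 3 → EuclideanSpace ℝ (Fin 2) := ![!₂[u 0, u 1], !₂[v 0, v 1], !₂[w 0, w 1]] with hp
  have hcomp : phiMap ∘ p = ![u, v, w] := by
    funext i
    fin_cases i <;> simp [p, phiMap_eq u hu, phiMap_eq v hv, phiMap_eq w hw]
  have hindp : AffineIndependent ℝ p := by
    apply AffineIndependent.of_comp phiMap.toAffineMap
    show AffineIndependent ℝ (phiMap ∘ p)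
    rw [hcomp]; exact hind
  have hspan : affineSpan ℝ (Set.range p) = ⊤ := by
    rw [hindp.affineSpan_eq_top_iff_card_eq_finrank_add_one]
    simp [finrank_euclideanSpace_fin]
  let b : AffineBasis (Fin 3) ℝ (EuclideanSpace ℝ (Fin 2)) := ⟨p, hindp, hspan⟩
  have hts' : ∑ i, t i = 1 := by rw [Fin.sum_univ_three]; exact hts
  have hxcomb : (Finset.univ.affineCombination ℝ p t : EuclideanSpace ℝ (Fin 2)) =
      t 0 • p 0 + t 1 • p 1 + t 2 • p 2 := by
    rw [Finset.univ.affineCombination_eq_linear_combination p t hts', Fin.sum_univ_three]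
  have hxint : t 0 • p 0 + t 1 • p 1 + t 2 • p 2 ∈
      interior (convexHull ℝ (Set.range p)) := by
    have hrange : Set.range p = Set.range (b : Fin 3 → EuclideanSpace ℝ (Fin 2)) := rfl
    rw [hrange, b.interior_convexHull]
    intro i
    rw [← hxcomb, show p = ⇑b from rfl,
      b.coord_apply_combination_of_mem (Finset.mem_univ i) hts']
    exact ht i
  have hxintr : t 0 • p 0 + t 1 • p 1 + t 2 • p 2 ∈
      intrinsicInterior ℝ (convexHull ℝ (Set.range p)) :=
    interior_subset_intrinsicInterior hxint
  have hset : ⇑phiMap.toAffineMap '' Set.range p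
      = ({u, v, w} : Set (EuclideanSpace ℝ (Fin 3))) := by
    rw [← Set.range_comp, show ⇑phiMap.toAffineMap ∘ p = ![u, v, w] from hcomp]
    ext x
    simp only [Set.mem_range, Set.mem_insert_iff, Set.mem_singleton_iff]
    constructor
    · rintro ⟨i, rfl⟩; fin_cases i <;> simp
    · rintro (rfl | rfl | rfl)
      exacts [⟨0, rfl⟩, ⟨1, rfl⟩, ⟨2, rfl⟩]
  have himg : phiMap '' intrinsicInterior ℝ (convexHull ℝ (Set.range p)) =
      intrinsicInterior ℝ (convexHull ℝ ({u, v, w} : Set (EuclideanSpace ℝ (Fin 3)))) := by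
    rw [← phiMap.image_intrinsicInterior,
      show (⇑phiMap : EuclideanSpace ℝ (Fin 2) → EuclideanSpace ℝ (Fin 3)) =
        ⇑phiMap.toAffineMap from rfl, AffineMap.image_convexHull, hset]
  rw [← himg]
  refine ⟨_, hxintr, ?_⟩
  have : phiMap (t 0 • p 0 + t 1 • p 1 + t 2 • p 2) = t 0 • u + t 1 • v + t 2 • w := by
    rw [← hxcomb]
    have hmap := Finset.univ.map_affineCombination p t hts' phiMap.toAffineMap
    rw [show phiMap ((Finset.affineCombination ℝ Finset.univ p) t)
        = phiMap.toAffineMap ((Finset.affineCombination ℝ Finset.univ p) t) from rfl, hmap,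
      show (⇑phiMap.toAffineMap ∘ p) = ![u, v, w] from hcomp,
      Finset.univ.affineCombination_eq_linear_combination _ _ hts', Fin.sum_univ_three]
    simp
  exact this

theorem empty_projected_triangle_implies_empty_tetrahedron
    (S' : Finset (EuclideanSpace ℝ (Fin 3)))
    (hpos : ∀ x ∈ S', 0 < x 2)
    (a b c : EuclideanSpace ℝ (Fin 3)) (ha : a ∈ S') (hb : b ∈ S') (hc : c ∈ S')
    (hproj : ∀ s ∈ S', s ∉ ({a, b, c} : Set (EuclideanSpace ℝ (Fin 3))) →
      centralProj s ∉ intrinsicInterior ℝ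
        (convexHull ℝ ({centralProj a, centralProj b, centralProj c} :
          Set (EuclideanSpace ℝ (Fin 3))))) :
    ∀ s ∈ S',
      s ∉ interior (convexHull ℝ ({0, a, b, c} : Set (EuclideanSpace ℝ (Fin 3)))) := by
  classical
  intro s hs hint
  have ha2 : (0:ℝ) < a 2 := hpos a ha
  have hb2 : (0:ℝ) < b 2 := hpos b hb
  have hc2 : (0:ℝ) < c 2 := hpos c hc
  have hs2 : (0:ℝ) < s 2 := hpos s hs
  set p4 : Fin 4 → EuclideanSpace ℝ (Fin 3) := ![0, a, b, c] with hp4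
  have hrange4 : Set.range p4 = ({0, a, b, c} : Set (EuclideanSpace ℝ (Fin 3))) := by
    ext x
    simp only [Set.mem_range, Set.mem_insert_iff, Set.mem_singleton_iff]
    constructor
    · rintro ⟨i, rfl⟩; fin_cases i <;> simp [p4]
    · rintro (rfl | rfl | rfl | rfl)
      exacts [⟨0, rfl⟩, ⟨1, rfl⟩, ⟨2, rfl⟩, ⟨3, rfl⟩]
  have hspan4 : affineSpan ℝ (Set.range p4) = ⊤ := by
    rw [hrange4, ← interior_convexHull_nonempty_iff_affineSpan_eq_top]
    exact ⟨s, hint⟩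
  have hind4 : AffineIndependent ℝ p4 := by
    rw [affineIndependent_iff_finrank_vectorSpan_eq ℝ p4
      (by simp : Fintype.card (Fin 4) = 3 + 1)]
    rw [← direction_affineSpan, hspan4, AffineSubspace.direction_top, finrank_top,
      finrank_euclideanSpace_fin]
  set b4 : AffineBasis (Fin 4) ℝ (EuclideanSpace ℝ (Fin 3)) := ⟨p4, hind4, hspan4⟩ with hb4
  set w : Fin 4 → ℝ := fun i => b4.coord i s with hwdef
  have hwpos : ∀ i, 0 < w i := by
    have := hint
    rw [← hrange4, show Set.range p4 = Set.range ⇑b4 from rfl,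
      b4.interior_convexHull] at this
    exact this
  have hw1 : ∑ i, w i = 1 := b4.sum_coord_apply_eq_one s
  have hscomb : s = w 1 • a + w 2 • b + w 3 • c := by
    have h1 : s = Finset.univ.affineCombination ℝ b4 w :=
      (b4.affineCombination_coord_eq_self s).symm
    rw [Finset.univ.affineCombination_eq_linear_combination _ _ hw1, Fin.sum_univ_four] at h1
    have h0 : b4 0 = 0 ∧ b4 1 = a ∧ b4 2 = b ∧ b4 3 = c := ⟨rfl, rfl, rfl, rfl⟩
    rw [h0.1, h0.2.1, h0.2.2.1, h0.2.2.2, smul_zero, zero_add] at h1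
    exact h1
  have hcoordvert : ∀ j : Fin 4, j ≠ 0 → b4.coord 0 (p4 j) = 0 := by
    intro j hj
    have h0 : b4.coord 0 (b4 j) = 0 := b4.coord_apply_ne (Ne.symm hj)
    have h1 : (b4 : Fin 4 → EuclideanSpace ℝ (Fin 3)) j = p4 j := by rw [hb4]; rfl
    rwa [h1] at h0

  have hsnot : s ∉ ({a, b, c} : Set (EuclideanSpace ℝ (Fin 3))) := by
    intro hmem
    have : b4.coord 0 s = 0 := by
      rcases hmem with h | h | h
      · rw [h, show a = p4 1 from rfl]; exact hcoordvert 1 (by decide)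
      · rw [h, show b = p4 2 from rfl]; exact hcoordvert 2 (by decide)
      · rw [h, show c = p4 3 from rfl]; exact hcoordvert 3 (by decide)
    exact (hwpos 0).ne' this
  have hscoord : s 2 = w 1 * a 2 + w 2 * b 2 + w 3 * c 2 := by
    conv_lhs => rw [hscomb]
    simp [PiLp.add_apply, PiLp.smul_apply, smul_eq_mul]
  set t : Fin 3 → ℝ := ![w 1 * a 2 / s 2, w 2 * b 2 / s 2, w 3 * c 2 / s 2] with htdef
  have e0 : t 0 = w 1 * a 2 / s 2 := rfl
  have e1 : t 1 = w 2 * b 2 / s 2 := rfl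
  have e2 : t 2 = w 3 * c 2 / s 2 := rfl
  have ht : ∀ i, 0 < t i := by
    intro i
    fin_cases i
    · exact div_pos (mul_pos (hwpos 1) ha2) hs2
    · exact div_pos (mul_pos (hwpos 2) hb2) hs2
    · exact div_pos (mul_pos (hwpos 3) hc2) hs2
  have hts : t 0 + t 1 + t 2 = 1 := by
    rw [e0, e1, e2, ← add_div, ← add_div, ← hscoord]
    exact div_self hs2.ne'
  have hπa : centralProj a 2 = 1 := by
    simp [centralProj, PiLp.smul_apply, smul_eq_mul, inv_mul_cancel₀ ha2.ne']
  have hπb : centralProj b 2 = 1 := by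
    simp [centralProj, PiLp.smul_apply, smul_eq_mul, inv_mul_cancel₀ hb2.ne']
  have hπc : centralProj c 2 = 1 := by
    simp [centralProj, PiLp.smul_apply, smul_eq_mul, inv_mul_cancel₀ hc2.ne']
  have hindπ : AffineIndependent ℝ ![centralProj a, centralProj b, centralProj c] := by
    set uu : Fin 4 → ℝˣ :=
      ![1, Units.mk0 (a 2)⁻¹ (inv_ne_zero ha2.ne'), Units.mk0 (b 2)⁻¹ (inv_ne_zero hb2.ne'),
        Units.mk0 (c 2)⁻¹ (inv_ne_zero hc2.ne')] with huu
    have h := (hind4.units_lineMap 0 uu).comp_embedding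
      ⟨Fin.succ, Fin.succ_injective 3⟩
    convert h using 1
    funext j
    have h0 : p4 0 = 0 := rfl
    fin_cases j <;>
      simp [centralProj, uu, h0, AffineMap.lineMap_apply, p4, vsub_eq_sub, vadd_eq_add]
  have key : ∀ (x : EuclideanSpace ℝ (Fin 3)) (wi : ℝ), 0 < x 2 →
      (wi * x 2 / s 2) • centralProj x = (s 2)⁻¹ • (wi • x) := by
    intro x wi hx
    rw [show centralProj x = (x 2)⁻¹ • x from rfl, smul_smul, smul_smul]
    congr 1
    field_simp
  have hπs : centralProj s =
      t 0 • centralProj a + t 1 • centralProj b + t 2 • centralProj c := by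
    rw [e0, e1, e2, key a (w 1) ha2, key b (w 2) hb2, key c (w 3) hc2,
      show centralProj s = (s 2)⁻¹ • s from rfl]
    nth_rewrite 2 [hscomb]
    rw [smul_add, smul_add]
  have hmem := aux_mem_intrinsic (centralProj a) (centralProj b) (centralProj c)
    hindπ hπa hπb hπc t ht hts
  rw [← hπs] at hmem
  exact hproj s hs hsnot hmem
end

section
/- Let I be a finite set of points in the plane and let p be a point with p ∉ I. Then there exists a subset J ⊆ I with 2·|J| ≥ |I| such that p does not belong to the convex hull of J. -/
theorem half_subset_avoiding_convex_hull
    (I : Finset (EuclideanSpace ℝ (Fin 2))) (p : EuclideanSpace ℝ (Fin 2)) (hp : p ∉ I) :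
    ∃ J ⊆ I, I.card ≤ 2 * J.card ∧
      p ∉ convexHull ℝ (J : Set (EuclideanSpace ℝ (Fin 2))) := by
  have hne : ∀ q ∈ I, q ≠ p := fun q hq h => hp (h ▸ hq)
  -- choose t such that the linear functional x ↦ x 0 + t * x 1 separates p from every point of I
  obtain ⟨t, ht⟩ : ∃ t : ℝ, ∀ q ∈ I, (q 0 - p 0) + t * (q 1 - p 1) ≠ 0 := by
    have hfin : (⋃ q ∈ (I : Set (EuclideanSpace ℝ (Fin 2))),
        {t : ℝ | (q 0 - p 0) + t * (q 1 - p 1) = 0}).Finite := by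
      apply Set.Finite.biUnion I.finite_toSet
      intro q hq
      by_cases hb : q 1 - p 1 = 0
      · have ha : q 0 - p 0 ≠ 0 := by
          intro ha
          apply hne q hq
          ext i
          fin_cases i
          · simpa [sub_eq_zero] using ha
          · simpa [sub_eq_zero] using hb
        convert Set.finite_empty
        ext s
        simp [hb, ha]
      · apply Set.Subsingleton.finite
        intro s hs u hu
        simp only [Set.mem_setOf_eq] at hs hu
        have : s * (q 1 - p 1) = u * (q 1 - p 1) := by linarith
        exact mul_right_cancel₀ hb this
    obtain ⟨t, ht⟩ := (hfin.infinite_compl).nonempty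
    refine ⟨t, fun q hq h => ht ?_⟩
    exact Set.mem_biUnion hq h
  set f : EuclideanSpace ℝ (Fin 2) → ℝ := fun x => x 0 + t * x 1 with hf
  have hlin : IsLinearMap ℝ f := by
    constructor
    · intro x y
      simp [hf, PiLp.add_apply]
      ring
    · intro c x
      simp [hf, PiLp.smul_apply]
      ring
  have hsep : ∀ q ∈ I, f q ≠ f p := by
    intro q hq h
    apply ht q hq
    simp only [hf] at h
    linarith
  set Jp := I.filter (fun q => f p < f q) with hJp
  set Jm := I.filter (fun q => f q < f p) with hJm
  have hcard : Jp.card + Jm.card = I.card := by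
    have h1 := Finset.card_filter_add_card_filter_not (s := I)
      (p := fun q => f p < f q)
    have h2 : I.filter (fun q => ¬ f p < f q) = Jm := by
      apply Finset.filter_congr
      intro q hq
      simp only [not_lt]
      constructor
      · intro h; exact lt_of_le_of_ne h (hsep q hq)
      · intro h; exact le_of_lt h
    rw [h2] at h1
    exact h1
  have hhullp : p ∉ convexHull ℝ (Jp : Set (EuclideanSpace ℝ (Fin 2))) := by
    intro hmem
    have hsub : convexHull ℝ (Jp : Set (EuclideanSpace ℝ (Fin 2))) ⊆ {x | f p < f x} := by
      apply convexHull_min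
      · intro x hx
        simp only [hJp, Finset.coe_filter, Set.mem_setOf_eq] at hx
        exact hx.2
      · exact convex_halfSpace_gt hlin (f p)
    exact lt_irrefl (f p) (hsub hmem)
  have hhullm : p ∉ convexHull ℝ (Jm : Set (EuclideanSpace ℝ (Fin 2))) := by
    intro hmem
    have hsub : convexHull ℝ (Jm : Set (EuclideanSpace ℝ (Fin 2))) ⊆ {x | f x < f p} := by
      apply convexHull_min
      · intro x hx
        simp only [hJm, Finset.coe_filter, Set.mem_setOf_eq] at hx
        exact hx.2
      · exact convex_halfSpace_lt hlin (f p)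
    exact lt_irrefl (f p) (hsub hmem)
  rcases le_total Jm.card Jp.card with h | h
  · exact ⟨Jp, Finset.filter_subset _ _, by omega, hhullp⟩
  · exact ⟨Jm, Finset.filter_subset _ _, by omega, hhullm⟩
end
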